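/- arXiv:2510.02305 — 5 statements merged into one kernel-verified Lean document; each statement's English description precedes it below -/
import Mathlib

section
/- Let A be a d* × d real matrix with orthonormal rows (A Aᵀ = I_{d*}), let b ∈ ℝ^{d*}, let P := I_d − Aᵀ A, and let x_1, …, x_N ∈ ℝ^d satisfy A x_i = b for every i. Let σ > 0 and define p̂(y) := (1/N) Σ_{i=1}^N (2πσ²)^{−d/2} exp(−‖y − x_i‖²/(2σ²)). Let ξ be an ℝ^d-valued random variable with E[ξ] = 0 and E[‖ξ‖²] < ∞. Then for every x ∈ ℝ^d, E[log p̂(x + ξ)] = E[log p̂(x + Pξ)] − E[‖Aξ‖²]/(2σ²). In particular, the two functions x ↦ E[log p̂(x + ξ)] and x ↦ E[log p̂(x + Pξ)] differ by a constant independent of x, so the probability measures on ℝ^d with Lebesgue densities proportional to exp(E[log p̂(x + ξ)]) and exp(E[log p̂(x + Pξ)]) coincide. -/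
/-! Every centre `xᵢ` lies on `M = {Ax = b}` and `A Aᵀ = I`, so splitting `v = Pv + AᵀAv` gives
`‖y + v - xᵢ‖² = ‖y + Pv - xᵢ‖² + 2⟪Ay - b, Av⟫ + ‖Av‖²`, where the correction does not depend on
`i`. It therefore factors out of the mixture:
`log p̂(y + v) = log p̂(y + Pv) - (2⟪Ay - b, Av⟫ + ‖Av‖²)/(2σ²)`. Taking expectations, the term
linear in `ξ` vanishes since `E[ξ] = 0`, and `log p̂` grows at most quadratically, so everything is
integrable when `E‖ξ‖² < ∞`. The two log-smoothings thus differ by a constant, and a constant factor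
of the density disappears on normalising. -/

open MeasureTheory Real
open scoped RealInnerProductSpace ENNReal

section Projection

variable {E F : Type*} [NormedAddCommGroup E] [InnerProductSpace ℝ E] [FiniteDimensional ℝ E]
  [NormedAddCommGroup F] [InnerProductSpace ℝ F] [FiniteDimensional ℝ F]

/-- The paper's `P`: the orthogonal projection onto `ker A` when `A Aᵀ = I`. -/
noncomputable def kerProj (A : E →ₗ[ℝ] F) : E →ₗ[ℝ] E := LinearMap.id - LinearMap.adjoint A ∘ₗ A

theorem kerProj_apply (A : E →ₗ[ℝ] F) (v : E) : kerProj A v = v - LinearMap.adjoint A (A v) :=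
  rfl

theorem norm_add_sq_eq_norm_add_kerProj_sq {A : E →ₗ[ℝ] F}
    (hA : A ∘ₗ LinearMap.adjoint A = LinearMap.id) (u w : E) :
    ‖u + w‖ ^ 2 = ‖u + kerProj A w‖ ^ 2 + 2 * ⟪A u, A w⟫ + ‖A w‖ ^ 2 := by
  have hAA : ∀ v, A (LinearMap.adjoint A v) = v := LinearMap.congr_fun hA
  set q := LinearMap.adjoint A (A w)
  have hsplit : u + w = (u + kerProj A w) + q := by rw [kerProj_apply]; abel
  have hcross : ⟪u + kerProj A w, q⟫ = ⟪A u, A w⟫ := by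
    simp [q, kerProj_apply, LinearMap.adjoint_inner_right, hAA]
  have hq : ‖q‖ ^ 2 = ‖A w‖ ^ 2 := by
    rw [← real_inner_self_eq_norm_sq, ← real_inner_self_eq_norm_sq, LinearMap.adjoint_inner_right,
      hAA]
  rw [hsplit, norm_add_sq_real, hcross, hq]

end Projection

section GaussianMixture

variable {E : Type*} [NormedAddCommGroup E] {ι : Type*} [Fintype ι]

noncomputable def gaussianMixture (c s : ℝ) (x : ι → E) (y : E) : ℝ :=
  c * ∑ i, exp (-‖y - x i‖ ^ 2 / s)

theorem gaussianMixture_pos [Nonempty ι] {c : ℝ} (hc : 0 < c) (s : ℝ) (x : ι → E) (y : E) :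
    0 < gaussianMixture c s x y :=
  mul_pos hc (Finset.sum_pos (fun _ _ => exp_pos _) Finset.univ_nonempty)

theorem continuous_gaussianMixture (c s : ℝ) (x : ι → E) :
    Continuous (gaussianMixture c s x) := by
  unfold gaussianMixture
  fun_prop

theorem abs_log_gaussianMixture_le {c s : ℝ} (hc : 0 < c) (hs : 0 < s) (x : ι → E) (i₀ : ι)
    (y : E) :
    |log (gaussianMixture c s x y)| ≤ |log c| + log (Fintype.card ι) + ‖y - x i₀‖ ^ 2 / s := by
  have : Nonempty ι := ⟨i₀⟩
  have hpos := gaussianMixture_pos hc s x y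
  have hupper : gaussianMixture c s x y ≤ c * Fintype.card ι := by
    refine mul_le_mul_of_nonneg_left ?_ hc.le
    calc ∑ i, exp (-‖y - x i‖ ^ 2 / s) ≤ ∑ _i : ι, (1 : ℝ) :=
          Finset.sum_le_sum fun i _ => exp_le_one_iff.2 (by rw [neg_div, neg_nonpos]; positivity)
      _ = Fintype.card ι := by simp
  have hlower : c * exp (-‖y - x i₀‖ ^ 2 / s) ≤ gaussianMixture c s x y :=
    mul_le_mul_of_nonneg_left (Finset.single_le_sum (f := fun i => exp (-‖y - x i‖ ^ 2 / s))
      (fun i _ => (exp_pos _).le) (Finset.mem_univ i₀)) hc.le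
  have hlog_upper := log_le_log hpos hupper
  have hlog_lower := log_le_log (by positivity) hlower
  rw [log_mul hc.ne' (by positivity)] at hlog_upper
  rw [log_mul hc.ne' (exp_pos _).ne', log_exp, neg_div] at hlog_lower
  have hcard : 0 ≤ log (Fintype.card ι) := log_nonneg (by exact_mod_cast Fintype.card_pos)
  have hquad : 0 ≤ ‖y - x i₀‖ ^ 2 / s := by positivity
  rw [abs_le]
  constructor <;> linarith [neg_abs_le (log c), le_abs_self (log c)]

variable {Ω : Type*} [MeasurableSpace Ω] {μ : Measure Ω}

theorem integrable_log_gaussianMixture [IsFiniteMeasure μ] [Nonempty ι] {c s : ℝ} (hc : 0 < c)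
    (hs : 0 < s) (x : ι → E) {ζ : Ω → E} (hζ : MemLp ζ 2 μ) (a : E) :
    Integrable (fun ω => log (gaussianMixture c s x (a + ζ ω))) μ := by
  obtain ⟨i₀⟩ := ‹Nonempty ι›
  have hcont : Continuous fun y => log (gaussianMixture c s x y) :=
    (continuous_gaussianMixture c s x).log fun y => (gaussianMixture_pos hc s x y).ne'
  have hshift : Integrable (fun ω => ‖(a - x i₀) + ζ ω‖ ^ 2) μ :=
    ((memLp_const (a - x i₀)).add hζ).integrable_norm_pow two_ne_zero
  refine Integrable.mono'
    ((integrable_const (|log c| + log (Fintype.card ι))).add (hshift.div_const s))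
    (hcont.comp_aestronglyMeasurable (aestronglyMeasurable_const.add hζ.1)) ?_
  refine Filter.Eventually.of_forall fun ω => ?_
  have hrw : a + ζ ω - x i₀ = (a - x i₀) + ζ ω := by abel
  simpa [hrw] using abs_log_gaussianMixture_le hc hs x i₀ (a + ζ ω)

end GaussianMixture

section Smoothing

variable {E F : Type*} [NormedAddCommGroup E] [InnerProductSpace ℝ E] [FiniteDimensional ℝ E]
  [NormedAddCommGroup F] [InnerProductSpace ℝ F] [FiniteDimensional ℝ F]
  {ι : Type*} [Fintype ι] {A : E →ₗ[ℝ] F} {b : F} {x : ι → E}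

theorem gaussianMixture_add_eq_mul_exp (hA : A ∘ₗ LinearMap.adjoint A = LinearMap.id)
    (hx : ∀ i, A (x i) = b) (c s : ℝ) (y v : E) :
    gaussianMixture c s x (y + v) =
      gaussianMixture c s x (y + kerProj A v) * exp (-(2 * ⟪A y - b, A v⟫ + ‖A v‖ ^ 2) / s) := by
  simp only [gaussianMixture, mul_assoc, Finset.sum_mul, ← exp_add]
  congr 2 with i
  have hsub : y + v - x i = (y - x i) + v := by abel
  have hsubP : y + kerProj A v - x i = (y - x i) + kerProj A v := by abel
  rw [hsub, hsubP, norm_add_sq_eq_norm_add_kerProj_sq hA, map_sub, hx]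
  congr 1
  ring

theorem log_gaussianMixture_add [Nonempty ι] (hA : A ∘ₗ LinearMap.adjoint A = LinearMap.id)
    (hx : ∀ i, A (x i) = b) {c : ℝ} (hc : 0 < c) (s : ℝ) (y v : E) :
    log (gaussianMixture c s x (y + v)) =
      log (gaussianMixture c s x (y + kerProj A v)) - (2 * ⟪A y - b, A v⟫ + ‖A v‖ ^ 2) / s := by
  rw [gaussianMixture_add_eq_mul_exp hA hx, log_mul (gaussianMixture_pos hc _ _ _).ne'
    (exp_pos _).ne', log_exp, neg_div, ← sub_eq_add_neg]

variable {Ω : Type*} [MeasurableSpace Ω] {μ : Measure Ω}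

theorem integral_log_gaussianMixture_add [IsFiniteMeasure μ] [Nonempty ι]
    (hA : A ∘ₗ LinearMap.adjoint A = LinearMap.id) (hx : ∀ i, A (x i) = b) {c s : ℝ}
    (hc : 0 < c) (hs : 0 < s) {ξ : Ω → E} (hξ : MemLp ξ 2 μ) (hmean : ∫ ω, ξ ω ∂μ = 0)
    (x₀ : E) :
    ∫ ω, log (gaussianMixture c s x (x₀ + ξ ω)) ∂μ =
      ∫ ω, log (gaussianMixture c s x (x₀ + kerProj A (ξ ω))) ∂μ -
        (∫ ω, ‖A (ξ ω)‖ ^ 2 ∂μ) / s := by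
  have hAξ : MemLp (fun ω => A (ξ ω)) 2 μ := (LinearMap.toContinuousLinearMap A).comp_memLp' hξ
  have hlin : Integrable (fun ω => ⟪A x₀ - b, A (ξ ω)⟫) μ :=
    (hAξ.integrable one_le_two).const_inner _
  have hlin_zero : ∫ ω, ⟪A x₀ - b, A (ξ ω)⟫ ∂μ = 0 := by
    rw [integral_inner (hAξ.integrable one_le_two)]
    have := (LinearMap.toContinuousLinearMap A).integral_comp_comm (hξ.integrable one_le_two)
    simp only [LinearMap.coe_toContinuousLinearMap'] at this
    rw [this, hmean, map_zero, inner_zero_right]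
  have hquad : Integrable (fun ω => ‖A (ξ ω)‖ ^ 2) μ := hAξ.integrable_norm_pow two_ne_zero
  have hPξ : MemLp (fun ω => kerProj A (ξ ω)) 2 μ :=
    (LinearMap.toContinuousLinearMap (kerProj A)).comp_memLp' hξ
  have hcorr : Integrable (fun ω => (2 * ⟪A x₀ - b, A (ξ ω)⟫ + ‖A (ξ ω)‖ ^ 2) / s) μ :=
    ((hlin.const_mul 2).add hquad).div_const s
  rw [integral_congr_ae (Filter.Eventually.of_forall fun ω =>
      log_gaussianMixture_add hA hx hc s x₀ (ξ ω)),
    integral_sub (integrable_log_gaussianMixture hc hs x hPξ x₀) hcorr, integral_div,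
    integral_add (hlin.const_mul 2) hquad, integral_const_mul, hlin_zero, mul_zero, zero_add]

end Smoothing

section Normalization

variable {α : Type*} [MeasurableSpace α]

theorem withDensity_ofReal_exp_sub (ν : Measure α) (g : α → ℝ) (C : ℝ) :
    ν.withDensity (fun a => ENNReal.ofReal (exp (g a - C))) =
      ENNReal.ofReal (exp (-C)) • ν.withDensity (fun a => ENNReal.ofReal (exp (g a))) := by
  rw [← withDensity_smul' _ _ ENNReal.ofReal_ne_top]
  congr 1 with a
  rw [Pi.smul_apply, smul_eq_mul, ← ENNReal.ofReal_mul (exp_pos _).le, ← exp_add, neg_add_eq_sub]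

theorem inv_smul_apply_univ_smul {k : ℝ≥0∞} (h0 : k ≠ 0) (htop : k ≠ ∞) (ν : Measure α) :
    ((k • ν) Set.univ)⁻¹ • (k • ν) = (ν Set.univ)⁻¹ • ν := by
  rw [Measure.smul_apply, smul_eq_mul, ENNReal.mul_inv (Or.inl h0) (Or.inl htop), smul_smul,
    mul_comm k⁻¹, mul_assoc, ENNReal.inv_mul_cancel h0 htop, mul_one]

end Normalization

/-- In the affine-manifold setting of Statement 2, for a centred
square-integrable random variable `ξ`, the log-domain smoothings satisfy
`E[log p̂(x + ξ)] = E[log p̂(x + Pξ)] − E[‖Aξ‖²]/(2σ²)` for every `x`; in particular the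
two functions differ by a constant, so the probability measures with Lebesgue densities
proportional to `exp(E[log p̂(x + ξ)])` and `exp(E[log p̂(x + Pξ)])` coincide. -/
theorem stmt_3 (d dstar N : ℕ) (hN : 0 < N)
    (A : EuclideanSpace ℝ (Fin d) →ₗ[ℝ] EuclideanSpace ℝ (Fin dstar))
    (hA : A ∘ₗ LinearMap.adjoint A = LinearMap.id)
    (b : EuclideanSpace ℝ (Fin dstar))
    (x : Fin N → EuclideanSpace ℝ (Fin d)) (hx : ∀ i, A (x i) = b)
    (σ : ℝ) (hσ : 0 < σ)
    {Ω : Type*} [MeasurableSpace Ω] (μ : Measure Ω) [IsProbabilityMeasure μ]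
    (ξ : Ω → EuclideanSpace ℝ (Fin d)) (hξ : Integrable ξ μ)
    (hmean : ∫ ω, ξ ω ∂μ = 0)
    (hsq : Integrable (fun ω => ‖ξ ω‖ ^ 2) μ) :
    let phat : EuclideanSpace ℝ (Fin d) → ℝ := fun y =>
      (1 / N : ℝ) * ∑ i, (2 * π * σ ^ 2) ^ (-(d : ℝ) / 2) *
        Real.exp (-‖y - x i‖ ^ 2 / (2 * σ ^ 2))
    let P : EuclideanSpace ℝ (Fin d) →ₗ[ℝ] EuclideanSpace ℝ (Fin d) :=
      LinearMap.id - LinearMap.adjoint A ∘ₗ A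
    let g₁ : EuclideanSpace ℝ (Fin d) → ℝ := fun x₀ => ∫ ω, Real.log (phat (x₀ + ξ ω)) ∂μ
    let g₂ : EuclideanSpace ℝ (Fin d) → ℝ := fun x₀ => ∫ ω, Real.log (phat (x₀ + P (ξ ω))) ∂μ
    let ν₁ : Measure (EuclideanSpace ℝ (Fin d)) :=
      volume.withDensity fun x₀ => ENNReal.ofReal (Real.exp (g₁ x₀))
    let ν₂ : Measure (EuclideanSpace ℝ (Fin d)) :=
      volume.withDensity fun x₀ => ENNReal.ofReal (Real.exp (g₂ x₀))
    (∀ x₀, g₁ x₀ = g₂ x₀ - (∫ ω, ‖A (ξ ω)‖ ^ 2 ∂μ) / (2 * σ ^ 2)) ∧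
      (ν₁ Set.univ)⁻¹ • ν₁ = (ν₂ Set.univ)⁻¹ • ν₂ := by
  intro phat P g₁ g₂ ν₁ ν₂
  have : Nonempty (Fin N) := ⟨⟨0, hN⟩⟩
  have hphat : phat = gaussianMixture (1 / N * (2 * π * σ ^ 2) ^ (-(d : ℝ) / 2)) (2 * σ ^ 2) x := by
    funext y
    simp only [phat, gaussianMixture, Finset.mul_sum, mul_assoc]
  have hg : ∀ x₀, g₁ x₀ = g₂ x₀ - (∫ ω, ‖A (ξ ω)‖ ^ 2 ∂μ) / (2 * σ ^ 2) := fun x₀ => by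
    simp only [g₁, g₂, hphat]
    exact integral_log_gaussianMixture_add hA hx (by positivity) (by positivity)
      ((memLp_two_iff_integrable_sq_norm hξ.1).2 hsq) hmean x₀
  refine ⟨hg, ?_⟩
  have hν : ν₁ = ENNReal.ofReal (exp (-((∫ ω, ‖A (ξ ω)‖ ^ 2 ∂μ) / (2 * σ ^ 2)))) • ν₂ := by
    simp only [ν₁, hg]
    exact withDensity_ofReal_exp_sub _ _ _
  rw [hν, inv_smul_apply_univ_smul (ENNReal.ofReal_pos.2 (exp_pos _)).ne' ENNReal.ofReal_ne_top]
end

section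
/- Let M ⊆ ℝ^d, let x, y ∈ M, let v ∈ ℝ^d with v ≠ 0, and let τ > 0. Suppose that for every r ∈ (0, τ) and every sign s ∈ {+1, −1}, dist(x + r s v/‖v‖, M) ≥ r. Then |⟨v, x − y⟩| ≤ (‖v‖ / (2τ)) ‖x − y‖². -/
open MeasureTheory Real

/-- If `x, y ∈ M`, `v ≠ 0`, `τ > 0`, and for every `r ∈ (0, τ)` and every sign
`s ∈ {+1, −1}` the point `x + r s v/‖v‖` is at distance at least `r` from `M`, then
`|⟨v, x − y⟩| ≤ (‖v‖/(2τ)) ‖x − y‖²`. -/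
theorem stmt_4 (d : ℕ) (M : Set (EuclideanSpace ℝ (Fin d)))
    (x y : EuclideanSpace ℝ (Fin d)) (hx : x ∈ M) (hy : y ∈ M)
    (v : EuclideanSpace ℝ (Fin d)) (hv : v ≠ 0) (τ : ℝ) (hτ : 0 < τ)
    (hreach : ∀ r ∈ Set.Ioo (0:ℝ) τ, ∀ s ∈ ({1, -1} : Set ℝ),
      r ≤ Metric.infDist (x + (r * s / ‖v‖) • v) M) :
    |(inner ℝ v (x - y) : ℝ)| ≤ ‖v‖ / (2 * τ) * ‖x - y‖ ^ 2 := by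
  have hvn : (0:ℝ) < ‖v‖ := norm_pos_iff.mpr hv
  set w := x - y with hw
  have step : ∀ r ∈ Set.Ioo (0:ℝ) τ, ∀ s ∈ ({1, -1} : Set ℝ),
      -(2 * (r * s) * (inner ℝ v w : ℝ)) ≤ ‖w‖ ^ 2 * ‖v‖ := by
    intro r hr s hs
    have hs2 : s ^ 2 = 1 := by rcases hs with h | h <;> simp_all <;> ring
    have h1 : r ≤ ‖w + (r * s / ‖v‖) • v‖ := by
      calc r ≤ Metric.infDist (x + (r * s / ‖v‖) • v) M := hreach r hr s hs
        _ ≤ dist (x + (r * s / ‖v‖) • v) y := Metric.infDist_le_dist_of_mem hy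
        _ = ‖w + (r * s / ‖v‖) • v‖ := by
            rw [dist_eq_norm]; congr 1; rw [hw]; abel
    have h2 : r ^ 2 ≤ ‖w + (r * s / ‖v‖) • v‖ ^ 2 :=
      pow_le_pow_left₀ (le_of_lt hr.1) h1 2
    have h3 : ‖w + (r * s / ‖v‖) • v‖ ^ 2
        = ‖w‖ ^ 2 + 2 * ((r * s / ‖v‖) * (inner ℝ v w : ℝ)) + (r * s / ‖v‖) ^ 2 * ‖v‖ ^ 2 := by
      rw [← real_inner_self_eq_norm_sq]
      rw [inner_add_add_self, real_inner_smul_right, real_inner_smul_left,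
        real_inner_smul_left, real_inner_smul_right,
        real_inner_self_eq_norm_sq, real_inner_self_eq_norm_sq, real_inner_comm w v]
      ring
    have h4 : (r * s / ‖v‖) ^ 2 * ‖v‖ ^ 2 = r ^ 2 := by
      field_simp
      rw [hs2, mul_one]
    rw [h3, h4] at h2
    have h5 : -(2 * (r * s) * (inner ℝ v w : ℝ)) / ‖v‖ ≤ ‖w‖ ^ 2 := by
      rw [neg_div]
      have e : (r * s / ‖v‖) * (inner ℝ v w : ℝ)
          = (2 * (r * s) * (inner ℝ v w : ℝ)) / ‖v‖ / 2 := by ring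
      rw [e] at h2
      linarith
    exact (div_le_iff₀ hvn).mp h5
  have key : ∀ r ∈ Set.Ioo (0:ℝ) τ, 2 * r * |(inner ℝ v w : ℝ)| ≤ ‖v‖ * ‖w‖ ^ 2 := by
    intro r hr
    have hp := step r hr 1 (by simp)
    have hm := step r hr (-1) (by simp)
    rcases abs_cases ((inner ℝ v w : ℝ)) with ⟨he, _⟩ | ⟨he, _⟩ <;> rw [he] <;> linarith
  have lim : 2 * τ * |(inner ℝ v w : ℝ)| ≤ ‖v‖ * ‖w‖ ^ 2 := by
    have ht : Filter.Tendsto (fun r : ℝ => 2 * r * |(inner ℝ v w : ℝ)|) (nhdsWithin τ (Set.Iio τ))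
        (nhds (2 * τ * |(inner ℝ v w : ℝ)|)) := by
      apply Filter.Tendsto.mono_left _ nhdsWithin_le_nhds
      exact (Continuous.mul (continuous_const.mul continuous_id) continuous_const).tendsto τ
    refine le_of_tendsto ht ?_
    filter_upwards [Ioo_mem_nhdsLT_of_mem (by constructor <;> [exact hτ; rfl] :
      τ ∈ Set.Ioc (0:ℝ) τ)] with r hr
    exact key r hr
  rw [div_mul_eq_mul_div, le_div_iff₀ (by positivity)]
  calc |(inner ℝ v w : ℝ)| * (2 * τ) = 2 * τ * |(inner ℝ v w : ℝ)| := by ring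
    _ ≤ ‖v‖ * ‖w‖ ^ 2 := lim
end

section
/- Let μ be a Borel probability measure on ℝ^d, let M ⊆ ℝ^d, let s > 0, and let C ⊆ M be a finite nonempty set such that M ⊆ ⋃_{c ∈ C} closedBall(c, s) and μ(closedBall(c, s)) ≥ m for every c ∈ C, for some m ∈ (0, 1]. Let X_1, …, X_N be i.i.d. random variables with law μ, and let μ̂ := (1/N) Σ_{i=1}^N δ_{X_i} be the empirical measure. Let δ ∈ (0, 1). If N ≥ (2/m²) · log(|C| / δ), then with probability at least 1 − δ it holds that for every x ∈ M, μ̂(closedBall(x, 2s)) ≥ m/2. -/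
open MeasureTheory ProbabilityTheory

/-- Hoeffding's lemma for a `{0,1}`-valued random variable with mean `p`:
the mgf satisfies `1 - p + p e^t ≤ exp (t p + t²/8)` (we only need `t ≤ 0`). -/
lemma bern_mgf_bound {p : ℝ} (hp0 : 0 ≤ p) (hp1 : p ≤ 1) {t : ℝ} (ht : t ≤ 0) :
    1 - p + p * Real.exp t ≤ Real.exp (t * p + t ^ 2 / 8) := by
  have hD : ∀ u : ℝ, 0 < 1 - p + p * Real.exp u := by
    intro u
    rcases hp0.eq_or_lt with h | h
    · simp [← h]
    · nlinarith [Real.exp_pos u, mul_pos h (Real.exp_pos u)]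
  set G : ℝ → ℝ := fun u => p + u / 4 - p * Real.exp u / (1 - p + p * Real.exp u) with hG
  have hDd : ∀ u : ℝ, HasDerivAt (fun v => 1 - p + p * Real.exp v) (p * Real.exp u) u := by
    intro u
    exact ((Real.hasDerivAt_exp u).const_mul p).const_add (1 - p)
  have hGd : ∀ u : ℝ, HasDerivAt G
      (1 / 4 - (p * Real.exp u * (1 - p + p * Real.exp u) -
        p * Real.exp u * (p * Real.exp u)) / (1 - p + p * Real.exp u) ^ 2) u := by
    intro u
    have h1 : HasDerivAt (fun v : ℝ => p + v / 4) (1 / 4) u := by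
      simpa using ((hasDerivAt_id u).div_const 4).const_add p
    have h2 : HasDerivAt (fun v => p * Real.exp v / (1 - p + p * Real.exp v))
        ((p * Real.exp u * (1 - p + p * Real.exp u) -
          p * Real.exp u * (p * Real.exp u)) / (1 - p + p * Real.exp u) ^ 2) u :=
      ((Real.hasDerivAt_exp u).const_mul p).div (hDd u) (hD u).ne'
    exact h1.sub h2
  have hGmono : Monotone G := by
    refine monotone_of_deriv_nonneg (fun u => (hGd u).differentiableAt) (fun u => ?_)
    rw [(hGd u).deriv]
    set a := p * Real.exp u with ha
    have ha0 : 0 ≤ a := mul_nonneg hp0 (Real.exp_pos u).le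
    have hb0 : 0 ≤ 1 - p := by linarith
    have hD2 : 0 < (1 - p + a) ^ 2 := pow_pos (hD u) 2
    rw [sub_nonneg, div_le_iff₀ hD2]
    nlinarith [sq_nonneg (a - (1 - p))]
  have hG0 : G 0 = 0 := by simp [hG]
  set F : ℝ → ℝ := fun u => u * p + u ^ 2 / 8 - Real.log (1 - p + p * Real.exp u) with hF
  have hFd : ∀ u : ℝ, HasDerivAt F (G u) u := by
    intro u
    have h1 : HasDerivAt (fun v : ℝ => v * p + v ^ 2 / 8) (1 * p + (2 : ℕ) * u ^ 1 / 8) u :=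
      ((hasDerivAt_id u).mul_const p).add ((hasDerivAt_pow 2 u).div_const 8)
    have h2 := (hDd u).log (hD u).ne'
    have h3 := h1.sub h2
    refine h3.congr_deriv ?_
    simp [hG]
    ring
  have hanti : AntitoneOn F (Set.Iic 0) := by
    refine antitoneOn_of_deriv_nonpos (convex_Iic 0)
      (fun u _ => (hFd u).differentiableAt.continuousAt.continuousWithinAt)
      (fun u _ => (hFd u).differentiableAt.differentiableWithinAt) (fun u hu => ?_)
    rw [interior_Iic] at hu
    rw [(hFd u).deriv]
    have := hGmono (le_of_lt hu)
    rw [hG0] at this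
    exact this
  have hF0 : F 0 = 0 := by simp [hF]
  have hFt : 0 ≤ F t := by
    have := hanti (Set.mem_Iic.2 ht) (Set.mem_Iic.2 le_rfl) ht
    rw [hF0] at this
    exact this
  have hlog : Real.log (1 - p + p * Real.exp t) ≤ t * p + t ^ 2 / 8 := by
    have h := hFt
    simp only [hF] at h
    linarith
  calc 1 - p + p * Real.exp t
      = Real.exp (Real.log (1 - p + p * Real.exp t)) := (Real.exp_log (hD t)).symm
    _ ≤ Real.exp (t * p + t ^ 2 / 8) := Real.exp_le_exp.2 hlog



/-- If a finite set `C ⊆ M` of centres `s`-covers `M` and each ball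
`closedBall(c, s)` has `μ`-mass at least `m`, and `X_1, …, X_N` are i.i.d. with law `μ`
with `N ≥ (2/m²) log(|C|/δ)`, then with probability at least `1 − δ` the empirical measure
gives every ball `closedBall(x, 2s)`, `x ∈ M`, mass at least `m/2`. -/
theorem stmt_6 (d : ℕ) (μ : Measure (EuclideanSpace ℝ (Fin d))) [IsProbabilityMeasure μ]
    (M : Set (EuclideanSpace ℝ (Fin d))) (s : ℝ) (hs : 0 < s)
    (C : Finset (EuclideanSpace ℝ (Fin d))) (hC : C.Nonempty) (hCM : ↑C ⊆ M)
    (hcover : M ⊆ ⋃ c ∈ C, Metric.closedBall c s)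
    (m : ℝ) (hm : 0 < m) (hm1 : m ≤ 1)
    (hmass : ∀ c ∈ C, ENNReal.ofReal m ≤ μ (Metric.closedBall c s))
    (N : ℕ) {Ω : Type*} [MeasurableSpace Ω] (P : Measure Ω) [IsProbabilityMeasure P]
    (X : Fin N → Ω → EuclideanSpace ℝ (Fin d)) (hXm : ∀ i, Measurable (X i))
    (hindep : iIndepFun X P)
    (hlaw : ∀ i, Measure.map (X i) P = μ)
    (δ : ℝ) (hδ : 0 < δ) (hδ1 : δ < 1)
    (hN : (2 / m ^ 2) * Real.log (C.card / δ) ≤ N) :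
    ENNReal.ofReal (1 - δ) ≤
      P {ω | ∀ x ∈ M,
        m / 2 ≤ ((Finset.univ.filter fun i => dist (X i ω) x ≤ 2 * s).card : ℝ) / N} := by
  have hCard : (1 : ℝ) ≤ (C.card : ℝ) := by exact_mod_cast hC.card_pos
  have hm2 : (0 : ℝ) < m ^ 2 := by positivity
  have hlogpos : 0 < Real.log ((C.card : ℝ) / δ) := by
    apply Real.log_pos
    rw [lt_div_iff₀ hδ]
    nlinarith
  have hNpos : 0 < N := by
    rcases Nat.eq_zero_or_pos N with h | h
    · exfalso
      rw [h] at hN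
      push_cast at hN
      nlinarith [hlogpos, hm2, div_pos (by norm_num : (0:ℝ) < 2) hm2]
    · exact h
  have hNR : (0 : ℝ) < N := by exact_mod_cast hNpos
  have hlogle : Real.log ((C.card : ℝ) / δ) ≤ (N : ℝ) * m ^ 2 / 2 := by
    have h := mul_le_mul_of_nonneg_right hN hm2.le
    have h2 : 2 / m ^ 2 * Real.log ((C.card : ℝ) / δ) * m ^ 2
        = 2 * Real.log ((C.card : ℝ) / δ) := by
      field_simp
    rw [h2] at h
    linarith
  have hexpδ : (C.card : ℝ) * Real.exp (-((N : ℝ) * m ^ 2 / 2)) ≤ δ := by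
    have h1 : (C.card : ℝ) / δ ≤ Real.exp ((N : ℝ) * m ^ 2 / 2) := by
      rw [← Real.exp_log (show (0 : ℝ) < (C.card : ℝ) / δ by positivity)]
      exact Real.exp_le_exp.2 hlogle
    rw [div_le_iff₀ hδ] at h1
    have h2 := mul_le_mul_of_nonneg_right h1 (Real.exp_pos (-((N : ℝ) * m ^ 2 / 2))).le
    have h3 : Real.exp ((N : ℝ) * m ^ 2 / 2) * Real.exp (-((N : ℝ) * m ^ 2 / 2)) = 1 := by
      rw [← Real.exp_add]; simp
    have h4 : Real.exp ((N : ℝ) * m ^ 2 / 2) * (δ * Real.exp (-((N : ℝ) * m ^ 2 / 2))) = δ := by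
      rw [mul_comm δ _, ← mul_assoc, h3, one_mul]
    rw [mul_assoc, h4] at h2
    exact h2
  set t : ℝ := -(2 * m) with htdef
  have ht0 : t ≤ 0 := by rw [htdef]; linarith
  set Y : EuclideanSpace ℝ (Fin d) → Fin N → Ω → ℝ :=
    fun c i ω => if dist (X i ω) c ≤ s then 1 else 0 with hYdef
  have hYmeas : ∀ c i, Measurable (Y c i) := by
    intro c i
    exact Measurable.ite ((hXm i) measurableSet_closedBall) measurable_const
      measurable_const
  set Bad : EuclideanSpace ℝ (Fin d) → Set Ω :=
    fun c => {ω | (∑ i : Fin N, Y c i) ω ≤ (N : ℝ) * m / 2} with hBadDef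
  have hmap : ∀ (c : EuclideanSpace ℝ (Fin d)) (i : Fin N),
      P ((X i) ⁻¹' Metric.closedBall c s) = μ (Metric.closedBall c s) := by
    intro c i
    rw [← hlaw i, Measure.map_apply (hXm i) measurableSet_closedBall]
  have hrep : ∀ (c : EuclideanSpace ℝ (Fin d)) (i : Fin N) (u : ℝ),
      (fun ω => Real.exp (u * Y c i ω)) =
        fun ω => Set.indicator ((X i) ⁻¹' Metric.closedBall c s)
          (fun _ => Real.exp u - 1) ω + 1 := by
    intro c i u
    funext ω
    by_cases h : dist (X i ω) c ≤ s
    · have hmem : ω ∈ (X i) ⁻¹' Metric.closedBall c s := h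
      simp [hYdef, h, Set.indicator_of_mem hmem]
    · have hmem : ω ∉ (X i) ⁻¹' Metric.closedBall c s := h
      simp [hYdef, h, Set.indicator_of_notMem hmem]
  have hint : ∀ (c : EuclideanSpace ℝ (Fin d)) (i : Fin N) (u : ℝ),
      Integrable (fun ω => Real.exp (u * Y c i ω)) P := by
    intro c i u
    rw [hrep c i u]
    exact ((integrable_const (Real.exp u - 1)).indicator
      ((hXm i) measurableSet_closedBall)).add (integrable_const 1)
  have hmgf : ∀ (c : EuclideanSpace ℝ (Fin d)) (i : Fin N) (u : ℝ),
      mgf (Y c i) P u = 1 - (μ (Metric.closedBall c s)).toReal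
        + (μ (Metric.closedBall c s)).toReal * Real.exp u := by
    intro c i u
    simp only [mgf]
    rw [hrep c i u]
    rw [integral_add ((integrable_const (Real.exp u - 1)).indicator
      ((hXm i) measurableSet_closedBall)) (integrable_const 1)]
    rw [integral_indicator_const _ ((hXm i) measurableSet_closedBall), integral_const]
    simp [measureReal_def, hmap c i, smul_eq_mul]
    ring
  have key : ∀ c ∈ C, (P (Bad c)).toReal ≤ Real.exp (-((N : ℝ) * m ^ 2 / 2)) := by
    intro c hc
    set p : ℝ := (μ (Metric.closedBall c s)).toReal with hpdef
    have hp0 : 0 ≤ p := ENNReal.toReal_nonneg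
    have hp1 : p ≤ 1 := by
      rw [hpdef]
      exact ENNReal.toReal_le_of_le_ofReal one_pos.le (by simpa using prob_le_one)
    have hpm : m ≤ p := by
      have h := hmass c hc
      have := ENNReal.toReal_mono (measure_ne_top μ _) h
      rwa [ENNReal.toReal_ofReal hm.le] at this
    have hindepY : iIndepFun (Y c) P := by
      have hfmeas : Measurable (fun x : EuclideanSpace ℝ (Fin d) =>
          if dist x c ≤ s then (1 : ℝ) else 0) :=
        Measurable.ite measurableSet_closedBall measurable_const measurable_const
      exact hindep.comp (fun _ => fun x => if dist x c ≤ s then (1 : ℝ) else 0)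
        (fun _ => hfmeas)
    have hS := measure_le_le_exp_mul_mgf (μ := P) (X := ∑ i : Fin N, Y c i)
      ((N : ℝ) * m / 2) ht0
      (hindepY.integrable_exp_mul_sum (fun i => hYmeas c i) (fun i _ => hint c i t))
    have hmgfS : mgf (∑ i : Fin N, Y c i) P t = (1 - p + p * Real.exp t) ^ N := by
      rw [hindepY.mgf_sum (fun i => hYmeas c i) Finset.univ]
      simp [hmgf c _ t, hpdef]
    have hbase : (0 : ℝ) ≤ 1 - p + p * Real.exp t := by
      nlinarith [Real.exp_pos t, mul_nonneg hp0 (Real.exp_pos t).le]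
    have hpow : (1 - p + p * Real.exp t) ^ N ≤ Real.exp (t * p + t ^ 2 / 8) ^ N :=
      pow_le_pow_left₀ hbase (bern_mgf_bound hp0 hp1 ht0) N
    have hfinal : Real.exp (-t * ((N : ℝ) * m / 2)) * Real.exp (t * p + t ^ 2 / 8) ^ N
        ≤ Real.exp (-((N : ℝ) * m ^ 2 / 2)) := by
      rw [← Real.exp_nat_mul, ← Real.exp_add]
      apply Real.exp_le_exp.2
      rw [htdef]
      nlinarith [mul_nonneg (mul_nonneg hNR.le hm.le) (sub_nonneg.2 hpm)]
    calc (P (Bad c)).toReal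
        ≤ Real.exp (-t * ((N : ℝ) * m / 2)) * mgf (∑ i : Fin N, Y c i) P t := hS
      _ ≤ Real.exp (-t * ((N : ℝ) * m / 2)) * Real.exp (t * p + t ^ 2 / 8) ^ N := by
          rw [hmgfS]
          exact mul_le_mul_of_nonneg_left hpow (Real.exp_pos _).le
      _ ≤ Real.exp (-((N : ℝ) * m ^ 2 / 2)) := hfinal
  have hBadMeas : ∀ c, MeasurableSet (Bad c) := by
    intro c
    have hSm : Measurable (∑ i : Fin N, Y c i) := by
      have : (∑ i : Fin N, Y c i) = fun ω => ∑ i : Fin N, Y c i ω := by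
        funext ω; simp
      rw [this]
      exact Finset.measurable_sum _ (fun i _ => hYmeas c i)
    exact measurableSet_le hSm measurable_const
  have hmeasU : MeasurableSet (⋃ c ∈ C, Bad c) :=
    C.finite_toSet.measurableSet_biUnion (fun c _ => hBadMeas c)
  have hUnion : P (⋃ c ∈ C, Bad c) ≤ ENNReal.ofReal δ := by
    calc P (⋃ c ∈ C, Bad c) ≤ ∑ c ∈ C, P (Bad c) := measure_biUnion_finset_le C Bad
      _ ≤ ∑ c ∈ C, ENNReal.ofReal (Real.exp (-((N : ℝ) * m ^ 2 / 2))) := by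
          refine Finset.sum_le_sum fun c hc => ?_
          rw [← ENNReal.ofReal_toReal (measure_ne_top P (Bad c))]
          exact ENNReal.ofReal_le_ofReal (key c hc)
      _ = ENNReal.ofReal ((C.card : ℝ) * Real.exp (-((N : ℝ) * m ^ 2 / 2))) := by
          rw [Finset.sum_const, nsmul_eq_mul,
            ENNReal.ofReal_mul (by positivity : (0:ℝ) ≤ (C.card : ℝ))]
          simp
      _ ≤ ENNReal.ofReal δ := ENNReal.ofReal_le_ofReal hexpδ
  refine le_trans ?_ (measure_mono (show (⋃ c ∈ C, Bad c)ᶜ ⊆ _ from ?_))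
  · rw [prob_compl_eq_one_sub hmeasU]
    have h1 : ENNReal.ofReal (1 - δ) = 1 - ENNReal.ofReal δ := by
      rw [ENNReal.ofReal_sub _ hδ.le, ENNReal.ofReal_one]
    rw [h1]
    exact tsub_le_tsub_left hUnion 1
  · intro ω hω
    simp only [Set.mem_compl_iff, Set.mem_iUnion, not_exists, hBadDef,
      Set.mem_setOf_eq, not_le] at hω
    simp only [Set.mem_setOf_eq]
    intro x hx
    obtain ⟨c, hcC, hxc⟩ : ∃ c ∈ C, x ∈ Metric.closedBall c s := by
      have := hcover hx
      simpa using this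
    have hbad := hω c hcC
    have hsum : (∑ i : Fin N, Y c i) ω
        = ((Finset.univ.filter fun i => dist (X i ω) c ≤ s).card : ℝ) := by
      simp [hYdef, Finset.sum_boole]
    have hsub : (Finset.univ.filter fun i => dist (X i ω) c ≤ s)
        ⊆ (Finset.univ.filter fun i => dist (X i ω) x ≤ 2 * s) := by
      intro i hi
      simp only [Finset.mem_filter, Finset.mem_univ, true_and] at hi ⊢
      have hxc' : dist x c ≤ s := Metric.mem_closedBall.1 hxc
      calc dist (X i ω) x ≤ dist (X i ω) c + dist c x := dist_triangle _ _ _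
        _ = dist (X i ω) c + dist x c := by rw [dist_comm c x]
        _ ≤ s + s := add_le_add hi hxc'
        _ = 2 * s := by ring
    have hcardle : ((Finset.univ.filter fun i => dist (X i ω) c ≤ s).card : ℝ)
        ≤ ((Finset.univ.filter fun i => dist (X i ω) x ≤ 2 * s).card : ℝ) := by
      exact_mod_cast Finset.card_le_card hsub
    rw [le_div_iff₀ hNR]
    rw [hsum] at hbad
    linarith
end

section
/- Let ν be a probability measure on a measurable space, let g be a real-valued measurable function with 0 < Z := ∫ exp(g) dν < ∞, and let μ be the probability measure with dμ/dν = exp(g)/Z. Let q > 1 and set β := max(q − 1, 1). If ∫ exp(β |g|) dμ < ∞, then (1/(q − 1)) · log ∫ exp((q − 1) g) dμ − log Z ≤ (2/β) · log ∫ exp(β |g|) dμ. (The left-hand side equals the Rényi divergence D_q(μ ‖ ν) of order q.) -/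
open MeasureTheory Real
open scoped ENNReal NNReal

lemma jensen_rpow {α : Type*} [MeasurableSpace α] (μ : Measure α) [IsProbabilityMeasure μ]
    {f : α → ℝ} (hf : AEStronglyMeasurable f μ) (h1 : ∀ a, 1 ≤ f a)
    {p r : ℝ} (hp : 0 < p) (hpr : p ≤ r)
    (hintp : Integrable (fun a => f a ^ p) μ) (hintr : Integrable (fun a => f a ^ r) μ) :
    ∫ a, f a ^ p ∂μ ≤ (∫ a, f a ^ r ∂μ) ^ (p / r) := by
  have hr : 0 < r := hp.trans_le hpr
  have hnn : ∀ a, (0:ℝ) ≤ f a := fun a => zero_le_one.trans (h1 a)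
  have key : ∀ (s : ℝ), 0 < s → Integrable (fun a => f a ^ s) μ →
      ∫⁻ a, ‖f a‖ₑ ^ s ∂μ = ENNReal.ofReal (∫ a, f a ^ s ∂μ) := by
    intro s hs hint
    rw [MeasureTheory.ofReal_integral_eq_lintegral_ofReal hint
      (Filter.Eventually.of_forall fun a => Real.rpow_nonneg (hnn a) s)]
    refine lintegral_congr fun a => ?_
    rw [← ENNReal.ofReal_rpow_of_nonneg (hnn a) hs.le, Real.enorm_eq_ofReal (hnn a)]
  have h := eLpNorm'_le_eLpNorm'_of_exponent_le hp hpr μ hf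
  rw [eLpNorm', eLpNorm', key p hp hintp, key r hr hintr] at h
  have hIp : 0 ≤ ∫ a, f a ^ p ∂μ :=
    integral_nonneg fun a => Real.rpow_nonneg (hnn a) p
  have hIr : 0 ≤ ∫ a, f a ^ r ∂μ :=
    integral_nonneg fun a => Real.rpow_nonneg (hnn a) r
  have h2 : (ENNReal.ofReal (∫ a, f a ^ p ∂μ)) ≤
      (ENNReal.ofReal (∫ a, f a ^ r ∂μ)) ^ (p / r) := by
    have h3 := ENNReal.rpow_le_rpow h (le_of_lt hp)
    rw [← ENNReal.rpow_mul, ← ENNReal.rpow_mul, one_div_mul_cancel hp.ne',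
      ENNReal.rpow_one, one_div, inv_mul_eq_div] at h3
    exact h3
  rw [ENNReal.ofReal_rpow_of_nonneg hIr (by positivity)] at h2
  exact (ENNReal.ofReal_le_ofReal_iff (by positivity)).mp h2

lemma stmt_11_aux {α : Type*} [MeasurableSpace α] (ν : Measure α) [IsProbabilityMeasure ν]
    (g : α → ℝ) (hg : Measurable g)
    (hi : Integrable (fun a => Real.exp (g a)) ν)
    (hZ : 0 < ∫ a, Real.exp (g a) ∂ν)
    (q : ℝ) (hq : 1 < q)
    (Z : ℝ) (hZdef : Z = ∫ a, Real.exp (g a) ∂ν)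
    (μ : Measure α)
    (hμdef : μ = ν.withDensity fun a => ENNReal.ofReal (Real.exp (g a) / Z))
    (β : ℝ) (hβdef : β = max (q - 1) 1)
    (hint : Integrable (fun a => Real.exp (β * |g a|)) μ) :
    (1 / (q - 1)) * Real.log (∫ a, Real.exp ((q - 1) * g a) ∂μ) - Real.log Z ≤
      (2 / β) * Real.log (∫ a, Real.exp (β * |g a|) ∂μ) := by
  have hZ0 : 0 < Z := hZdef ▸ hZ
  have hβ1 : (1:ℝ) ≤ β := hβdef ▸ le_max_right _ _
  have hβ0 : (0:ℝ) < β := lt_of_lt_of_le one_pos hβ1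
  have hq1 : (0:ℝ) < q - 1 := by linarith
  have hqβ : q - 1 ≤ β := hβdef ▸ le_max_left _ _
  set f : α → ℝ := fun a => Real.exp |g a| with hfdef
  have h1f : ∀ a, 1 ≤ f a := fun a => Real.one_le_exp (abs_nonneg _)
  have hnnf : ∀ a, (0:ℝ) ≤ f a := fun a => zero_le_one.trans (h1f a)
  have hfmeas : Measurable f := Real.measurable_exp.comp hg.abs
  have hfs : ∀ (s : ℝ), (fun a => Real.exp (s * |g a|)) = fun a => f a ^ s := by
    intro s; funext a; rw [hfdef, ← Real.exp_mul, mul_comm]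
  -- density measurability
  have hdmeas : Measurable fun a => Real.toNNReal (Real.exp (g a) / Z) :=
    ((Real.measurable_exp.comp hg).div_const Z).real_toNNReal
  have hμint : ∀ (h : α → ℝ), ∫ a, h a ∂μ = ∫ a, (Real.exp (g a) / Z) * h a ∂ν := by
    intro h
    rw [hμdef, show (fun a => ENNReal.ofReal (Real.exp (g a) / Z)) =
        fun a => ((Real.toNNReal (Real.exp (g a) / Z) : ℝ≥0) : ℝ≥0∞) from rfl,
      integral_withDensity_eq_integral_smul hdmeas]
    refine integral_congr_ae (Filter.Eventually.of_forall fun a => ?_)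
    simp only [NNReal.smul_def, smul_eq_mul]
    rw [Real.coe_toNNReal _ (by positivity)]
  haveI hprob : IsProbabilityMeasure μ := by
    constructor
    rw [hμdef, withDensity_apply _ MeasurableSet.univ, setLIntegral_univ,
      ← MeasureTheory.ofReal_integral_eq_lintegral_ofReal (hi.div_const _)
        (Filter.Eventually.of_forall fun a => by positivity)]
    rw [integral_div, hZdef, div_self hZ.ne', ENNReal.ofReal_one]
  -- integrability of powers of f
  have hintβ : Integrable (fun a => f a ^ β) μ := (hfs β) ▸ hint
  have hint_s : ∀ (s : ℝ), 0 ≤ s → s ≤ β → Integrable (fun a => f a ^ s) μ := by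
    intro s hs hsβ
    have hms : Measurable fun a => f a ^ s :=
      (hfs s) ▸ (Real.measurable_exp.comp (hg.abs.const_mul s))
    refine hintβ.mono hms.aestronglyMeasurable
      (Filter.Eventually.of_forall fun a => ?_)
    rw [Real.norm_of_nonneg (Real.rpow_nonneg (hnnf a) s),
      Real.norm_of_nonneg (Real.rpow_nonneg (hnnf a) β)]
    exact Real.rpow_le_rpow_of_exponent_le (h1f a) hsβ
  set M : ℝ := ∫ a, Real.exp (β * |g a|) ∂μ with hMdef
  have hMf : M = ∫ a, f a ^ β ∂μ := by rw [hMdef, hfs β]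
  have hM1 : 1 ≤ M := by
    rw [hMf]
    calc (1:ℝ) = ∫ _a, (1:ℝ) ∂μ := by simp
    _ ≤ ∫ a, f a ^ β ∂μ := by
        refine integral_mono (integrable_const 1) hintβ fun a => ?_
        calc (1:ℝ) = (1:ℝ) ^ β := (Real.one_rpow β).symm
        _ ≤ f a ^ β := Real.rpow_le_rpow zero_le_one (h1f a) hβ0.le
  have hM0 : 0 < M := lt_of_lt_of_le one_pos hM1
  have hlogM : 0 ≤ Real.log M := Real.log_nonneg hM1
  -- Term A
  have hintq : Integrable (fun a => Real.exp ((q - 1) * g a)) μ := by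
    refine hintβ.mono ((Real.measurable_exp.comp (hg.const_mul _)).aestronglyMeasurable)
      (Filter.Eventually.of_forall fun a => ?_)
    rw [Real.norm_of_nonneg (Real.exp_nonneg _),
      Real.norm_of_nonneg (Real.rpow_nonneg (hnnf a) β)]
    calc Real.exp ((q - 1) * g a) ≤ Real.exp (β * |g a|) := by
          refine Real.exp_le_exp.mpr ?_
          calc (q - 1) * g a ≤ (q - 1) * |g a| :=
                mul_le_mul_of_nonneg_left (le_abs_self _) hq1.le
          _ ≤ β * |g a| := mul_le_mul_of_nonneg_right hqβ (abs_nonneg _)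
    _ = f a ^ β := by
          show Real.exp (β * |g a|) = Real.exp |g a| ^ β
          rw [← Real.exp_mul, mul_comm]
  have hI1pos : 0 < ∫ a, Real.exp ((q - 1) * g a) ∂μ := by
    rw [integral_pos_iff_support_of_nonneg (fun a => Real.exp_nonneg _) hintq]
    have : (Function.support fun a => Real.exp ((q - 1) * g a)) = Set.univ := by
      ext a; simp [Function.support, (Real.exp_pos _).ne']
    rw [this]; simp
  have hI1le : ∫ a, Real.exp ((q - 1) * g a) ∂μ ≤ M ^ ((q - 1) / β) := by
    have step1 : ∫ a, Real.exp ((q - 1) * g a) ∂μ ≤ ∫ a, f a ^ (q - 1) ∂μ := by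
      refine integral_mono hintq (hint_s _ hq1.le hqβ) fun a => ?_
      have hfa : f a ^ (q - 1) = Real.exp ((q - 1) * |g a|) := by
        show Real.exp |g a| ^ (q - 1) = _
        rw [← Real.exp_mul, mul_comm]
      rw [hfa]
      exact Real.exp_le_exp.mpr (mul_le_mul_of_nonneg_left (le_abs_self _) hq1.le)
    refine step1.trans ?_
    rw [hMf]
    exact jensen_rpow μ hfmeas.aestronglyMeasurable h1f hq1 hqβ (hint_s _ hq1.le hqβ) hintβ
  have hA : (1 / (q - 1)) * Real.log (∫ a, Real.exp ((q - 1) * g a) ∂μ) ≤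
      (1 / β) * Real.log M := by
    have hlog : Real.log (∫ a, Real.exp ((q - 1) * g a) ∂μ) ≤ ((q - 1) / β) * Real.log M := by
      rw [← Real.log_rpow hM0]
      exact Real.log_le_log hI1pos hI1le
    calc (1 / (q - 1)) * Real.log (∫ a, Real.exp ((q - 1) * g a) ∂μ)
        ≤ (1 / (q - 1)) * (((q - 1) / β) * Real.log M) :=
          mul_le_mul_of_nonneg_left hlog (by positivity)
    _ = (1 / β) * Real.log M := by field_simp
  -- Term B
  have hintneg : Integrable (fun a => Real.exp (-g a)) μ := by
    refine hintβ.mono ((Real.measurable_exp.comp hg.neg).aestronglyMeasurable)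
      (Filter.Eventually.of_forall fun a => ?_)
    rw [Real.norm_of_nonneg (Real.exp_nonneg _),
      Real.norm_of_nonneg (Real.rpow_nonneg (hnnf a) β)]
    calc Real.exp (-g a) ≤ Real.exp (β * |g a|) := by
          refine Real.exp_le_exp.mpr ?_
          calc -g a ≤ |g a| := neg_le_abs _
          _ = 1 * |g a| := (one_mul _).symm
          _ ≤ β * |g a| := mul_le_mul_of_nonneg_right hβ1 (abs_nonneg _)
    _ = f a ^ β := by
          show Real.exp (β * |g a|) = Real.exp |g a| ^ β
          rw [← Real.exp_mul, mul_comm]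
  have hinv : ∫ a, Real.exp (-g a) ∂μ = 1 / Z := by
    rw [hμint]
    have : ∀ a, (Real.exp (g a) / Z) * Real.exp (-g a) = 1 / Z := by
      intro a
      rw [div_mul_eq_mul_div, ← Real.exp_add, add_neg_cancel, Real.exp_zero]
    simp_rw [this]
    simp
  have hBle : 1 / Z ≤ M ^ (1 / β) := by
    rw [← hinv]
    have step1 : ∫ a, Real.exp (-g a) ∂μ ≤ ∫ a, f a ∂μ := by
      refine integral_mono hintneg (by simpa using hint_s 1 zero_le_one hβ1) fun a => ?_
      exact Real.exp_le_exp.mpr (neg_le_abs _)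
    refine step1.trans ?_
    rw [hMf]
    have := jensen_rpow μ hfmeas.aestronglyMeasurable h1f one_pos hβ1
      (by simpa using hint_s 1 zero_le_one hβ1) hintβ
    simpa using this
  have hB : -Real.log Z ≤ (1 / β) * Real.log M := by
    have h1 : Real.log (1 / Z) ≤ Real.log (M ^ (1 / β)) :=
      Real.log_le_log (by positivity) hBle
    rw [Real.log_rpow hM0, one_div, Real.log_inv] at h1
    exact h1
  have : (1 / β) * Real.log M + (1 / β) * Real.log M = (2 / β) * Real.log M := by ring
  linarith

/-- For a probability measure `ν`, `g` measurable with
`0 < Z = ∫ exp(g) dν < ∞`, `μ` the probability measure with `dμ/dν = exp(g)/Z`, `q > 1` and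
`β = max(q−1, 1)`: if `∫ exp(β|g|) dμ < ∞`, then
`(1/(q−1)) log ∫ exp((q−1)g) dμ − log Z ≤ (2/β) log ∫ exp(β|g|) dμ`. -/
theorem stmt_11 {α : Type*} [MeasurableSpace α] (ν : Measure α) [IsProbabilityMeasure ν]
    (g : α → ℝ) (hg : Measurable g)
    (hi : Integrable (fun a => Real.exp (g a)) ν)
    (hZ : 0 < ∫ a, Real.exp (g a) ∂ν)
    (q : ℝ) (hq : 1 < q) :
    let Z : ℝ := ∫ a, Real.exp (g a) ∂ν
    let μ : Measure α := ν.withDensity fun a => ENNReal.ofReal (Real.exp (g a) / Z)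
    let β : ℝ := max (q - 1) 1
    Integrable (fun a => Real.exp (β * |g a|)) μ →
      (1 / (q - 1)) * Real.log (∫ a, Real.exp ((q - 1) * g a) ∂μ) - Real.log Z ≤
        (2 / β) * Real.log (∫ a, Real.exp (β * |g a|) ∂μ) := by
  intro Z μ β hint
  exact stmt_11_aux ν g hg hi hZ q hq Z rfl μ rfl β rfl hint
end

section
/- Let D be a nonnegative real-valued random variable, let a ≥ 0, σ > 0, C ≥ 0, c > 0, and suppose that P(D ≥ r) ≤ exp(C − (r − a)²/(4σ²)) for every r ≥ a. Define R := a + 16 c σ² + (256 c² σ⁴ + 32 σ² C)^{1/2}. Then E[exp(c D)] ≤ exp(c R) + (32π)^{1/2} c σ exp(c a); consequently, log E[exp(c D)] ≤ c R + (32π)^{1/2} c σ. -/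
open MeasureTheory Real

lemma stmt12_aux_key (a σ C c r : ℝ) (hσ : 0 < σ) (hC : 0 ≤ C) (hc : 0 < c)
    (hr : a + 16 * c * σ ^ 2 + Real.sqrt (256 * c ^ 2 * σ ^ 4 + 32 * σ ^ 2 * C) ≤ r) :
    c * (r - a) + C ≤ (r - a) ^ 2 / (8 * σ ^ 2) := by
  set T := Real.sqrt (256 * c ^ 2 * σ ^ 4 + 32 * σ ^ 2 * C) with hT
  have hT0 : 0 ≤ T := Real.sqrt_nonneg _
  have hTsq : T ^ 2 = 256 * c ^ 2 * σ ^ 4 + 32 * σ ^ 2 * C :=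
    Real.sq_sqrt (by positivity)
  set s := r - a with hs
  have hsS : 16 * c * σ ^ 2 + T ≤ s := by simp [hs]; linarith
  have hs0 : 0 ≤ s := le_trans (by positivity) hsS
  have hTs : T * T ≤ T * s :=
    mul_le_mul_of_nonneg_left (by nlinarith [mul_pos hc (pow_pos hσ 2)]) hT0
  have hss : (16 * c * σ ^ 2 + T) * s ≤ s * s := mul_le_mul_of_nonneg_right hsS hs0
  rw [le_div_iff₀ (by positivity : (0:ℝ) < 8 * σ ^ 2)]
  nlinarith [mul_pos hc (pow_pos hσ 2), mul_nonneg (mul_nonneg hc.le (pow_pos hσ 2).le) hs0]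

lemma stmt12_aux_tail (a σ C c : ℝ) (hσ : 0 < σ) (hC : 0 ≤ C) (hc : 0 < c) :
    ∫⁻ r in Set.Ioi (a + 16 * c * σ ^ 2 + Real.sqrt (256 * c ^ 2 * σ ^ 4 + 32 * σ ^ 2 * C)),
        ENNReal.ofReal (c * Real.exp (c * r) * Real.exp (C - (r - a) ^ 2 / (4 * σ ^ 2))) ≤
      ENNReal.ofReal (Real.sqrt (8 * Real.pi) * c * σ * Real.exp (c * a)) := by
  set R := a + 16 * c * σ ^ 2 + Real.sqrt (256 * c ^ 2 * σ ^ 4 + 32 * σ ^ 2 * C) with hR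
  set g : ℝ → ℝ := fun r => c * Real.exp (c * a) * Real.exp (-(1/(8*σ^2)) * (r - a)^2) with hg
  have hgm : Measurable fun r => ENNReal.ofReal (g r) := by
    apply Measurable.ennreal_ofReal; fun_prop
  have hgi : Integrable g :=
    ((integrable_exp_neg_mul_sq (by positivity : (0:ℝ) < 1/(8*σ^2))).comp_sub_right
      a).const_mul _
  have hpt : ∀ r ∈ Set.Ioi R,
      ENNReal.ofReal (c * Real.exp (c * r) * Real.exp (C - (r - a) ^ 2 / (4 * σ ^ 2)))
        ≤ ENNReal.ofReal (g r) := by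
    intro r hr
    apply ENNReal.ofReal_le_ofReal
    show c * Real.exp (c * r) * Real.exp (C - (r - a) ^ 2 / (4 * σ ^ 2)) ≤
      c * Real.exp (c * a) * Real.exp (-(1/(8*σ^2)) * (r - a)^2)
    rw [mul_assoc, mul_assoc, ← Real.exp_add, ← Real.exp_add]
    apply mul_le_mul_of_nonneg_left _ hc.le
    apply Real.exp_le_exp.2
    have e1 : (r - a)^2/(4*σ^2) = (r - a)^2/(8*σ^2) + (1/(8*σ^2))*(r - a)^2 := by
      field_simp; ring
    have := stmt12_aux_key a σ C c r hσ hC hc (le_of_lt hr)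
    linarith
  calc ∫⁻ r in Set.Ioi R,
        ENNReal.ofReal (c * Real.exp (c * r) * Real.exp (C - (r - a) ^ 2 / (4 * σ ^ 2)))
      ≤ ∫⁻ r in Set.Ioi R, ENNReal.ofReal (g r) := setLIntegral_mono hgm hpt
    _ ≤ ∫⁻ r, ENNReal.ofReal (g r) := setLIntegral_le_lintegral _ _
    _ = ENNReal.ofReal (∫ r, g r) :=
        (ofReal_integral_eq_lintegral_ofReal hgi (ae_of_all _ fun r => by positivity)).symm
    _ = ENNReal.ofReal (Real.sqrt (8 * Real.pi) * c * σ * Real.exp (c * a)) := by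
        congr 1
        rw [hg]
        rw [integral_const_mul]
        have h1 : ∫ r : ℝ, Real.exp (-(1/(8*σ^2)) * (r - a)^2) =
            ∫ r : ℝ, Real.exp (-(1/(8*σ^2)) * r^2) := by
          have := integral_add_right_eq_self (μ := volume)
            (fun x : ℝ => Real.exp (-(1/(8*σ^2)) * x^2)) (-a)
          simpa [sub_eq_add_neg] using this
        have h2 := integral_gaussian (1/(8*σ^2))
        have h3 : Real.pi / (1/(8*σ^2)) = (8*Real.pi) * σ^2 := by field_simp
        rw [h1, h2, h3, Real.sqrt_mul (by positivity), Real.sqrt_sq hσ.le]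
        ring

lemma stmt12_aux_pt (c R d : ℝ) (hc : 0 < c) :
    ENNReal.ofReal (Real.exp (c * d)) ≤ ENNReal.ofReal (Real.exp (c * R)) +
      ∫⁻ r in Set.Ioi R, (Set.Iio d).indicator
        (fun r => ENNReal.ofReal (c * Real.exp (c * r))) r := by
  rcases le_or_gt d R with hdR | hdR
  · exact le_trans (ENNReal.ofReal_le_ofReal (Real.exp_le_exp.2
      (mul_le_mul_of_nonneg_left hdR hc.le))) le_self_add
  · have hint : IntegrableOn (fun r => c * Real.exp (c * r)) (Set.Ioo R d) := by
      apply (Continuous.integrableOn_Icc (by fun_prop)).mono_set Set.Ioo_subset_Icc_self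
    have hcalc : ∫ r in Set.Ioo R d, c * Real.exp (c * r) =
        Real.exp (c * d) - Real.exp (c * R) := by
      rw [← integral_Ioc_eq_integral_Ioo, ← intervalIntegral.integral_of_le hdR.le]
      have : ∀ x ∈ Set.uIcc R d, HasDerivAt (fun x => Real.exp (c * x))
          (c * Real.exp (c * x)) x := by
        intro x _
        simpa [mul_comm] using ((hasDerivAt_id x).const_mul c).exp
      exact intervalIntegral.integral_eq_sub_of_hasDerivAt this
        ((Continuous.intervalIntegrable (by fun_prop) R d))
    have heq : ∫⁻ r in Set.Ioi R, (Set.Iio d).indicator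
        (fun r => ENNReal.ofReal (c * Real.exp (c * r))) r =
        ENNReal.ofReal (Real.exp (c * d) - Real.exp (c * R)) := by
      rw [lintegral_indicator measurableSet_Iio,
        Measure.restrict_restrict measurableSet_Iio, Set.Iio_inter_Ioi,
        ← ofReal_integral_eq_lintegral_ofReal hint
          (ae_of_all _ fun r => by positivity), hcalc]
    rw [heq, ← ENNReal.ofReal_add (by positivity)
      (sub_nonneg.2 (Real.exp_le_exp.2 (mul_le_mul_of_nonneg_left hdR.le hc.le)))]
    simp

/-- A sub-Gaussian tail bound `P(D ≥ r) ≤ exp(C − (r−a)²/(4σ²))` for `r ≥ a`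
implies, with `R = a + 16cσ² + (256c²σ⁴ + 32σ²C)^{1/2}`, the MGF bounds
`E[exp(cD)] ≤ exp(cR) + (32π)^{1/2} c σ exp(ca)` and
`log E[exp(cD)] ≤ cR + (32π)^{1/2} c σ`. -/
theorem stmt_12 {Ω : Type*} [MeasurableSpace Ω] (P : Measure Ω) [IsProbabilityMeasure P]
    (D : Ω → ℝ) (hD : Measurable D) (hD0 : ∀ ω, 0 ≤ D ω)
    (a : ℝ) (ha : 0 ≤ a) (σ : ℝ) (hσ : 0 < σ) (C : ℝ) (hC : 0 ≤ C) (c : ℝ) (hc : 0 < c)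
    (htail : ∀ r, a ≤ r →
      P {ω | r ≤ D ω} ≤ ENNReal.ofReal (Real.exp (C - (r - a) ^ 2 / (4 * σ ^ 2)))) :
    let R : ℝ := a + 16 * c * σ ^ 2 + Real.sqrt (256 * c ^ 2 * σ ^ 4 + 32 * σ ^ 2 * C)
    (∫ ω, Real.exp (c * D ω) ∂P ≤
        Real.exp (c * R) + Real.sqrt (32 * Real.pi) * c * σ * Real.exp (c * a)) ∧
      Real.log (∫ ω, Real.exp (c * D ω) ∂P) ≤
        c * R + Real.sqrt (32 * Real.pi) * c * σ := by
  intro R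
  have hRdef : R = a + 16 * c * σ ^ 2 + Real.sqrt (256 * c ^ 2 * σ ^ 4 + 32 * σ ^ 2 * C) := rfl
  have hRa : a ≤ R := by
    rw [hRdef]
    nlinarith [Real.sqrt_nonneg (256 * c ^ 2 * σ ^ 4 + 32 * σ ^ 2 * C),
      mul_pos hc (pow_pos hσ 2)]
  set K := Real.sqrt (32 * Real.pi) * c * σ with hK
  have hK0 : 0 ≤ K := by positivity
  -- the swap
  have hswap : ∫⁻ ω, (∫⁻ r in Set.Ioi R, (Set.Iio (D ω)).indicator
        (fun r => ENNReal.ofReal (c * Real.exp (c * r))) r) ∂P =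
      ∫⁻ r in Set.Ioi R, (∫⁻ ω, (Set.Iio (D ω)).indicator
        (fun r => ENNReal.ofReal (c * Real.exp (c * r))) r ∂P) := by
    apply lintegral_lintegral_swap
    have hsetm : MeasurableSet {p : Ω × ℝ | p.2 < D p.1} :=
      measurableSet_lt measurable_snd (hD.comp measurable_fst)
    have : (Function.uncurry fun (ω : Ω) => (Set.Iio (D ω)).indicator
        (fun r => ENNReal.ofReal (c * Real.exp (c * r)))) =
        {p : Ω × ℝ | p.2 < D p.1}.indicator
          (fun p => ENNReal.ofReal (c * Real.exp (c * p.2))) := by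
      funext z
      simp [Function.uncurry, Set.indicator_apply]
    rw [this]
    exact (Measurable.indicator (by fun_prop) hsetm).aemeasurable
  -- inner integral bound
  have hinner : ∀ r ∈ Set.Ioi R,
      (∫⁻ ω, (Set.Iio (D ω)).indicator
        (fun r => ENNReal.ofReal (c * Real.exp (c * r))) r ∂P) ≤
      ENNReal.ofReal (c * Real.exp (c * r) * Real.exp (C - (r - a) ^ 2 / (4 * σ ^ 2))) := by
    intro r hr
    have hmr : MeasurableSet {ω | r < D ω} := measurableSet_lt measurable_const hD
    have heq : (fun ω => (Set.Iio (D ω)).indicator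
        (fun r => ENNReal.ofReal (c * Real.exp (c * r))) r) =
        {ω | r < D ω}.indicator (fun _ => ENNReal.ofReal (c * Real.exp (c * r))) := by
      funext ω
      simp [Set.indicator_apply]
    rw [heq, lintegral_indicator hmr, setLIntegral_const]
    calc ENNReal.ofReal (c * Real.exp (c * r)) * P {ω | r < D ω}
        ≤ ENNReal.ofReal (c * Real.exp (c * r)) * P {ω | r ≤ D ω} := by
          apply mul_le_mul_right
          exact measure_mono (Set.setOf_subset_setOf.2 fun ω => le_of_lt)
      _ ≤ ENNReal.ofReal (c * Real.exp (c * r)) *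
            ENNReal.ofReal (Real.exp (C - (r - a) ^ 2 / (4 * σ ^ 2))) := by
          apply mul_le_mul_right
          exact htail r (hRa.trans (le_of_lt hr))
      _ = ENNReal.ofReal (c * Real.exp (c * r) * Real.exp (C - (r - a) ^ 2 / (4 * σ ^ 2))) :=
          (ENNReal.ofReal_mul (by positivity)).symm
  -- total lintegral bound
  have hlin : ∫⁻ ω, ENNReal.ofReal (Real.exp (c * D ω)) ∂P ≤
      ENNReal.ofReal (Real.exp (c * R)) +
        ENNReal.ofReal (Real.sqrt (8 * Real.pi) * c * σ * Real.exp (c * a)) := by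
    calc ∫⁻ ω, ENNReal.ofReal (Real.exp (c * D ω)) ∂P
        ≤ ∫⁻ ω, (ENNReal.ofReal (Real.exp (c * R)) +
            ∫⁻ r in Set.Ioi R, (Set.Iio (D ω)).indicator
              (fun r => ENNReal.ofReal (c * Real.exp (c * r))) r) ∂P :=
          lintegral_mono fun ω => stmt12_aux_pt c R (D ω) hc
      _ = ENNReal.ofReal (Real.exp (c * R)) +
            ∫⁻ ω, (∫⁻ r in Set.Ioi R, (Set.Iio (D ω)).indicator
              (fun r => ENNReal.ofReal (c * Real.exp (c * r))) r) ∂P := by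
          rw [lintegral_add_left measurable_const, lintegral_const, measure_univ, mul_one]
      _ = ENNReal.ofReal (Real.exp (c * R)) +
            ∫⁻ r in Set.Ioi R, (∫⁻ ω, (Set.Iio (D ω)).indicator
              (fun r => ENNReal.ofReal (c * Real.exp (c * r))) r ∂P) := by rw [hswap]
      _ ≤ ENNReal.ofReal (Real.exp (c * R)) +
            ∫⁻ r in Set.Ioi R, ENNReal.ofReal
              (c * Real.exp (c * r) * Real.exp (C - (r - a) ^ 2 / (4 * σ ^ 2))) := by
          apply add_le_add_right
          exact setLIntegral_mono (Measurable.ennreal_ofReal (by fun_prop)) hinner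
      _ ≤ ENNReal.ofReal (Real.exp (c * R)) +
            ENNReal.ofReal (Real.sqrt (8 * Real.pi) * c * σ * Real.exp (c * a)) := by
          apply add_le_add_right
          exact stmt12_aux_tail a σ C c hσ hC hc
  -- integrability and integral conversion
  have hmeas : Measurable fun ω => Real.exp (c * D ω) := by fun_prop
  have hnn : 0 ≤ᵐ[P] fun ω => Real.exp (c * D ω) := ae_of_all _ fun ω => (Real.exp_pos _).le
  have hInt : Integrable (fun ω => Real.exp (c * D ω)) P := by
    refine ⟨hmeas.aestronglyMeasurable, ?_⟩
    rw [hasFiniteIntegral_iff_ofReal hnn]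
    exact lt_of_le_of_lt hlin (by finiteness)
  have hIeq : ∫ ω, Real.exp (c * D ω) ∂P =
      (∫⁻ ω, ENNReal.ofReal (Real.exp (c * D ω)) ∂P).toReal :=
    integral_eq_lintegral_of_nonneg_ae hnn hmeas.aestronglyMeasurable
  have hE : ∫ ω, Real.exp (c * D ω) ∂P ≤
      Real.exp (c * R) + Real.sqrt (8 * Real.pi) * c * σ * Real.exp (c * a) := by
    rw [hIeq]
    apply ENNReal.toReal_le_of_le_ofReal (by positivity)
    rw [ENNReal.ofReal_add (by positivity) (by positivity)]
    exact hlin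
  have h8_32 : Real.sqrt (8 * Real.pi) ≤ Real.sqrt (32 * Real.pi) :=
    Real.sqrt_le_sqrt (by nlinarith [Real.pi_pos])
  have part1 : ∫ ω, Real.exp (c * D ω) ∂P ≤
      Real.exp (c * R) + Real.sqrt (32 * Real.pi) * c * σ * Real.exp (c * a) := by
    refine hE.trans ?_
    gcongr
  refine ⟨part1, ?_⟩
  have hE1 : 1 ≤ ∫ ω, Real.exp (c * D ω) ∂P := by
    have := integral_mono (integrable_const 1) hInt
      (fun ω => Real.one_le_exp (mul_nonneg hc.le (hD0 ω)))
    simpa using this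
  have hposE : (0:ℝ) < ∫ ω, Real.exp (c * D ω) ∂P := lt_of_lt_of_le one_pos hE1
  calc Real.log (∫ ω, Real.exp (c * D ω) ∂P)
      ≤ Real.log (Real.exp (c * R) + K * Real.exp (c * a)) := by
        apply Real.log_le_log hposE
        convert part1 using 2
    _ ≤ Real.log (Real.exp (c * R) * (1 + K)) := by
        apply Real.log_le_log (add_pos_of_pos_of_nonneg (Real.exp_pos _)
          (mul_nonneg hK0 (Real.exp_pos _).le))
        have hexp : Real.exp (c * a) ≤ Real.exp (c * R) :=
          Real.exp_le_exp.2 (mul_le_mul_of_nonneg_left hRa hc.le)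
        nlinarith [Real.exp_pos (c * R), Real.exp_pos (c * a)]
    _ = c * R + Real.log (1 + K) := by
        rw [Real.log_mul (Real.exp_ne_zero _) (by positivity), Real.log_exp]
    _ ≤ c * R + K := by
        have := Real.log_le_sub_one_of_pos (show (0:ℝ) < 1 + K by linarith)
        linarith
end
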